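/- arXiv:2406.06771 — 6 statements merged into one kernel-verified Lean document; each statement's English description precedes it below -/
import Mathlib

section
/- If μ is a Borel probability measure on S¹ with μ({p}) = 0 for every point p ∈ S¹ (i.e. μ has no atoms), then P_μ(ℓ < 1) = 1/3. -/
open MeasureTheory Real
open scoped ENNReal

noncomputable section

/-- The Euclidean plane `ℝ²`. -/
abbrev Plane : Type := EuclideanSpace ℝ (Fin 2)

/-- The unit circle `S¹ ⊆ ℝ²`. -/
def unitCircle : Set Plane := Metric.sphere 0 1

/- The line through `x` and `y` if `x ≠ y`; the tangent line to the unit circle at `x`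
if `x = y` (for `x` on the unit circle, the tangent line is `{p | ⟪p, x⟫ = 1}`). -/
open Classical in
def chordLine (x y : Plane) : Set Plane :=
  if x = y then {p : Plane | inner ℝ p x = (1 : ℝ)}
  else (affineSpan ℝ ({x, y} : Set Plane) : Set Plane)

/-- `P_μ(ℓ < r)`: the `μ⊗μ⊗μ⊗μ`-measure of the set of quadruples `(x₁,x₂,x₃,x₄)` in `(S¹)⁴`
such that some point `p` with `‖p‖ < r` lies on both `aff(x₁,x₂)` and `aff(x₃,x₄)`. -/
def probLT (μ : Measure unitCircle) (r : ℝ) : ℝ≥0∞ :=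
  (μ.prod (μ.prod (μ.prod μ)))
    {q : unitCircle × unitCircle × unitCircle × unitCircle |
      ∃ p : Plane, ‖p‖ < r ∧ p ∈ chordLine (q.1 : Plane) (q.2.1 : Plane) ∧
        p ∈ chordLine (q.2.2.1 : Plane) (q.2.2.2 : Plane)}

/-! Of the three ways to split four distinct points of the circle into two chords, exactly one
gives chords crossing inside the disc: in terms of the signs of the signed areas of the four
triangles, this follows from the identity `[abc] - [abd] + [acd] = [bcd]`. When `μ` has no atoms
the four i.i.d. points are almost surely distinct, and permuting them preserves `μ⊗μ⊗μ⊗μ`, so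
the three splittings are equally likely and each has probability `1/3`. -/

def ExactlyOne (P Q R : Prop) : Prop := (P ∨ Q ∨ R) ∧ ¬(P ∧ Q) ∧ ¬(P ∧ R) ∧ ¬(Q ∧ R)

lemma exists_mem_Ioo_lineMap_eq_zero_iff {u v : ℝ} (hu : u ≠ 0) :
    (∃ t ∈ Set.Ioo (0 : ℝ) 1, AffineMap.lineMap u v t = 0) ↔ u * v < 0 := by
  simp only [AffineMap.lineMap_apply_ring', Set.mem_Ioo]
  constructor
  · rintro ⟨t, ⟨h0, h1⟩, h⟩
    have huv : t * (u * v) = -((1 - t) * u ^ 2) := by linear_combination u * h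
    have : 0 < (1 - t) * u ^ 2 := by have := sub_pos.2 h1; positivity
    nlinarith
  · intro h
    have hne : u - v ≠ 0 := by
      rintro huv
      rw [sub_eq_zero.1 huv] at h
      exact (mul_self_nonneg v).not_gt h
    refine ⟨u / (u - v), ?_, by field_simp; ring⟩
    rcases hu.lt_or_gt with hu | hu
    · have hv : 0 < v := pos_of_mul_neg_right h hu.le
      exact ⟨div_pos_of_neg_of_neg hu (by linarith),
        (div_lt_one_of_neg (by linarith)).2 (by linarith)⟩
    · have hv : v < 0 := neg_of_mul_neg_right h hu.le
      exact ⟨div_pos hu (by linarith), (div_lt_one (by linarith)).2 (by linarith)⟩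

section InnerProductSpace

variable {E : Type*} [NormedAddCommGroup E] [InnerProductSpace ℝ E]

lemma norm_lineMap_sq (x y : E) (t : ℝ) :
    ‖AffineMap.lineMap x y t‖ ^ 2 =
      (1 - t) * ‖x‖ ^ 2 + t * ‖y‖ ^ 2 - t * (1 - t) * ‖y - x‖ ^ 2 := by
  rw [AffineMap.lineMap_apply_module, norm_add_sq_real, norm_sub_sq_real, norm_smul, norm_smul,
    real_inner_smul_left, real_inner_smul_right, mul_pow, mul_pow, Real.norm_eq_abs,
    Real.norm_eq_abs, sq_abs, sq_abs, real_inner_comm]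
  ring

lemma norm_lineMap_sq_of_norm_eq_one {x y : E} (hx : ‖x‖ = 1) (hy : ‖y‖ = 1) (t : ℝ) :
    ‖AffineMap.lineMap x y t‖ ^ 2 = 1 - t * (1 - t) * ‖y - x‖ ^ 2 := by
  rw [norm_lineMap_sq, hx, hy]; ring

lemma norm_lineMap_lt_one_iff {x y : E} (hx : ‖x‖ = 1) (hy : ‖y‖ = 1) (hxy : x ≠ y) {t : ℝ} :
    ‖AffineMap.lineMap x y t‖ < 1 ↔ t ∈ Set.Ioo 0 1 := by
  have hyx : 0 < ‖y - x‖ ^ 2 := by positivity [sub_ne_zero.2 hxy.symm]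
  rw [← sq_lt_one_iff₀ (norm_nonneg _), norm_lineMap_sq_of_norm_eq_one hx hy, Set.mem_Ioo]
  constructor
  · intro h
    have : 0 < t * (1 - t) := pos_of_mul_pos_left (by linarith) hyx.le
    constructor <;> nlinarith
  · rintro ⟨h0, h1⟩
    nlinarith [mul_pos (mul_pos h0 (sub_pos.2 h1)) hyx]

lemma norm_lineMap_eq_one_iff {x y : E} (hx : ‖x‖ = 1) (hy : ‖y‖ = 1) (hxy : x ≠ y) {t : ℝ} :
    ‖AffineMap.lineMap x y t‖ = 1 ↔ t = 0 ∨ t = 1 := by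
  have hyx : ‖y - x‖ ^ 2 ≠ 0 := by positivity [sub_ne_zero.2 hxy.symm]
  rw [← pow_eq_one_iff_of_nonneg (norm_nonneg _) two_ne_zero, norm_lineMap_sq_of_norm_eq_one hx hy]
  constructor
  · intro h
    have : t * (1 - t) = 0 := by
      simpa [hyx] using (show t * (1 - t) * ‖y - x‖ ^ 2 = 0 by linarith)
    rcases mul_eq_zero.1 this with h | h
    · exact Or.inl h
    · exact Or.inr (by linarith)
  · rintro (rfl | rfl) <;> ring

end InnerProductSpace

/-- Twice the signed area of the triangle `abc`. -/
def signedArea (a b c : Plane) : ℝ := (b 0 - a 0) * (c 1 - a 1) - (b 1 - a 1) * (c 0 - a 0)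

lemma signedArea_self_left (a b : Plane) : signedArea a b a = 0 := by
  simp only [signedArea]; ring

lemma signedArea_self_right (a b : Plane) : signedArea a b b = 0 := by
  simp only [signedArea]; ring

lemma signedArea_swap (a b c : Plane) : signedArea a c b = -signedArea a b c := by
  simp only [signedArea]; ring

lemma signedArea_rotate (a b c : Plane) : signedArea b c a = signedArea a b c := by
  simp only [signedArea]; ring

lemma signedArea_cocycle (a b c d : Plane) :
    signedArea a b c - signedArea a b d + signedArea a c d = signedArea b c d := by
  simp only [signedArea]; ring

lemma signedArea_lineMap (a b c d : Plane) (t : ℝ) :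
    signedArea a b (AffineMap.lineMap c d t) =
      AffineMap.lineMap (signedArea a b c) (signedArea a b d) t := by
  simp only [signedArea, AffineMap.lineMap_apply_module, PiLp.add_apply,
    PiLp.smul_apply, smul_eq_mul]
  ring

lemma signedArea_eq_zero_iff {a b p : Plane} (hab : a ≠ b) :
    signedArea a b p = 0 ↔ p ∈ line[ℝ, a, b] := by
  rw [mem_affineSpan_pair_iff_exists_lineMap_eq]
  constructor
  · intro h
    have hba : (b 0 - a 0) ^ 2 + (b 1 - a 1) ^ 2 ≠ 0 := by
      intro h0
      refine hab (PiLp.ext (Fin.forall_fin_two.2 ⟨?_, ?_⟩)) <;>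
        nlinarith [sq_nonneg (b 0 - a 0), sq_nonneg (b 1 - a 1)]
    -- `p - a` is parallel to `b - a`, so it is its own projection onto `b - a`
    refine ⟨((b 0 - a 0) * (p 0 - a 0) + (b 1 - a 1) * (p 1 - a 1)) /
      ((b 0 - a 0) ^ 2 + (b 1 - a 1) ^ 2), PiLp.ext (Fin.forall_fin_two.2 ⟨?_, ?_⟩)⟩ <;>
      simp only [signedArea] at h <;>
      simp only [AffineMap.lineMap_apply_module, PiLp.add_apply, PiLp.smul_apply, smul_eq_mul] <;>
      field_simp
    · linear_combination (b 1 - a 1) * h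
    · linear_combination -(b 0 - a 0) * h
  · rintro ⟨t, rfl⟩
    rw [signedArea_lineMap, signedArea_self_left, signedArea_self_right,
      AffineMap.lineMap_same_apply]

lemma signedArea_ne_zero {a b c : Plane} (ha : ‖a‖ = 1) (hb : ‖b‖ = 1) (hc : ‖c‖ = 1)
    (hab : a ≠ b) (hca : c ≠ a) (hcb : c ≠ b) : signedArea a b c ≠ 0 := by
  intro h
  obtain ⟨t, rfl⟩ := mem_affineSpan_pair_iff_exists_lineMap_eq.1 ((signedArea_eq_zero_iff hab).1 h)
  rcases (norm_lineMap_eq_one_iff ha hb hab).1 hc with rfl | rfl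
  · exact hca (AffineMap.lineMap_apply_zero _ _)
  · exact hcb (AffineMap.lineMap_apply_one _ _)

lemma chordLine_of_ne {x y : Plane} (h : x ≠ y) : chordLine x y = line[ℝ, x, y] := by
  simp [chordLine, h]

def ChordsMeetInDisc (a b c d : Plane) : Prop :=
  ∃ p : Plane, ‖p‖ < 1 ∧ p ∈ chordLine a b ∧ p ∈ chordLine c d

lemma ChordsMeetInDisc.comm {a b c d : Plane} :
    ChordsMeetInDisc a b c d ↔ ChordsMeetInDisc c d a b :=
  exists_congr fun _ => and_congr_right' and_comm

lemma chordsMeetInDisc_iff {a b c d : Plane} (hc : ‖c‖ = 1) (hd : ‖d‖ = 1) (hcd : c ≠ d)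
    (habc : signedArea a b c ≠ 0) :
    ChordsMeetInDisc a b c d ↔ signedArea a b c * signedArea a b d < 0 := by
  have hab : a ≠ b := by
    rintro rfl
    exact habc (by simp only [signedArea]; ring)
  rw [ChordsMeetInDisc, chordLine_of_ne hab, chordLine_of_ne hcd,
    ← exists_mem_Ioo_lineMap_eq_zero_iff habc]
  constructor
  · rintro ⟨p, hp, hpab, hpcd⟩
    obtain ⟨t, rfl⟩ := mem_affineSpan_pair_iff_exists_lineMap_eq.1 hpcd
    exact ⟨t, (norm_lineMap_lt_one_iff hc hd hcd).1 hp,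
      signedArea_lineMap a b c d t ▸ (signedArea_eq_zero_iff hab).2 hpab⟩
  · rintro ⟨t, ht, h0⟩
    exact ⟨AffineMap.lineMap c d t, (norm_lineMap_lt_one_iff hc hd hcd).2 ht,
      (signedArea_eq_zero_iff hab).1 (signedArea_lineMap a b c d t ▸ h0),
      AffineMap.lineMap_mem_affineSpan_pair _ _ _⟩

lemma exactlyOne_of_signs {A B C D : ℝ} (hA : A ≠ 0) (hB : B ≠ 0) (hC : C ≠ 0)
    (hD : A - B + C = D) (hAB : A * B < 0 ↔ C * D < 0) :
    ExactlyOne (A * B < 0) (0 < A * C) (B * C < 0) := by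
  have not_all : ¬(A * B < 0 ∧ 0 < A * C ∧ B * C < 0) := by
    rintro ⟨h1, h2, h3⟩
    have h4 := hAB.1 h1
    rw [← hD] at h4
    nlinarith [mul_self_nonneg C]
  -- any two of the three conditions imply the third, so only `not_all` needs the identity `hD`
  rcases hA.lt_or_gt with hA | hA <;> rcases hB.lt_or_gt with hB | hB <;>
    rcases hC.lt_or_gt with hC | hC <;>
    refine ⟨by first | (left; nlinarith) | (right; left; nlinarith) | (right; right; nlinarith),
      ?_, ?_, ?_⟩ <;> rintro ⟨h1, h2⟩ <;>
    first | nlinarith | exact not_all ⟨by nlinarith, by nlinarith, by nlinarith⟩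

lemma norm_coe_unitCircle (u : unitCircle) : ‖(u : Plane)‖ = 1 :=
  mem_sphere_zero_iff_norm.1 u.2

lemma chordsMeetInDisc_trichotomy {a b c d : unitCircle} (h : [a, b, c, d].Nodup) :
    ExactlyOne (ChordsMeetInDisc a b c d) (ChordsMeetInDisc a c b d)
      (ChordsMeetInDisc a d c b) := by
  simp only [List.nodup_cons, List.mem_cons, List.not_mem_nil, or_false, not_or,
    List.nodup_nil, and_true, not_false_eq_true] at h
  obtain ⟨⟨hab, hac, had⟩, ⟨hbc, hbd⟩, hcd⟩ := h
  have on_circle := norm_coe_unitCircle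
  have ne_zero {x y z : unitCircle} (hxy : x ≠ y) (hzx : z ≠ x) (hzy : z ≠ y) :
      signedArea x y z ≠ 0 :=
    signedArea_ne_zero (on_circle x) (on_circle y) (on_circle z) (Subtype.coe_ne_coe.2 hxy)
      (Subtype.coe_ne_coe.2 hzx) (Subtype.coe_ne_coe.2 hzy)
  have h12 := chordsMeetInDisc_iff (on_circle c) (on_circle d) (Subtype.coe_ne_coe.2 hcd)
    (ne_zero hab (Ne.symm hac) (Ne.symm hbc))
  have h13 : ChordsMeetInDisc a c b d ↔ 0 < signedArea a b c * signedArea a c d := by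
    rw [chordsMeetInDisc_iff (on_circle b) (on_circle d) (Subtype.coe_ne_coe.2 hbd)
      (ne_zero hac (Ne.symm hab) hbc), signedArea_swap, neg_mul, neg_lt_zero]
  have h14 : ChordsMeetInDisc a d c b ↔ signedArea a b d * signedArea a c d < 0 := by
    rw [chordsMeetInDisc_iff (on_circle c) (on_circle b) (Subtype.coe_ne_coe.2 (Ne.symm hbc))
      (ne_zero had (Ne.symm hac) hcd), signedArea_swap, signedArea_swap a b d, neg_mul_neg,
      mul_comm]
  have h34 : ChordsMeetInDisc a b c d ↔ signedArea a c d * signedArea b c d < 0 := by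
    rw [ChordsMeetInDisc.comm, chordsMeetInDisc_iff (on_circle a) (on_circle b)
      (Subtype.coe_ne_coe.2 hab) (ne_zero hcd hac had), signedArea_rotate a c d,
      signedArea_rotate b c d]
  rw [h12, h13, h14]
  exact exactlyOne_of_signs (ne_zero hab (Ne.symm hac) (Ne.symm hbc))
    (ne_zero hab (Ne.symm had) (Ne.symm hbd)) (ne_zero hac (Ne.symm had) (Ne.symm hcd))
    (signedArea_cocycle a b c d) (h12.symm.trans h34)

section Measure

open Measure

variable {α β γ : Type*} [MeasurableSpace α] [MeasurableSpace β] [MeasurableSpace γ]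

lemma measurePreserving_prod_left_comm (μ : Measure α) (ν : Measure β) (ρ : Measure γ)
    [SFinite μ] [SFinite ν] [SFinite ρ] :
    MeasurePreserving (fun p : α × β × γ => (p.2.1, p.1, p.2.2))
      (μ.prod (ν.prod ρ)) (ν.prod (μ.prod ρ)) :=
  (measurePreserving_prodAssoc ν μ ρ).comp
    ((measurePreserving_swap.prod (MeasurePreserving.id ρ)).comp
      (measurePreserving_prodAssoc μ ν ρ).symm)

variable (μ : Measure α)

lemma measurePreserving_swap_two_three [SFinite μ] :
    MeasurePreserving (fun q : α × α × α × α => (q.1, q.2.2.1, q.2.1, q.2.2.2))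
      (μ.prod (μ.prod (μ.prod μ))) (μ.prod (μ.prod (μ.prod μ))) :=
  (MeasurePreserving.id μ).prod (measurePreserving_prod_left_comm μ μ μ)

lemma measurePreserving_swap_two_four [SFinite μ] :
    MeasurePreserving (fun q : α × α × α × α => (q.1, q.2.2.2, q.2.2.1, q.2.1))
      (μ.prod (μ.prod (μ.prod μ))) (μ.prod (μ.prod (μ.prod μ))) :=
  have swap_three_four := (MeasurePreserving.id μ).prod
    ((MeasurePreserving.id μ).prod (measurePreserving_swap (μ := μ) (ν := μ)))
  (measurePreserving_swap_two_three μ).comp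
    (swap_three_four.comp (measurePreserving_swap_two_three μ))

lemma ae_fst_ne_snd [MeasurableEq α] [SFinite μ] [NullSingletonClass μ] :
    ∀ᵐ p ∂μ.prod μ, p.1 ≠ p.2 :=
  (ae_prod_iff_ae_ae measurableSet_diagonal.compl).2 (ae_of_all _ fun x => (μ.ae_ne x).mono
    fun _ h => Ne.symm h)

lemma ae_nodup_quadruple [MeasurableEq α] [IsProbabilityMeasure μ] [NullSingletonClass μ] :
    ∀ᵐ q ∂μ.prod (μ.prod (μ.prod μ)), [q.1, q.2.1, q.2.2.1, q.2.2.2].Nodup := by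
  have ae_ne {f g : α × α × α × α → α}
      (h : MeasurePreserving (fun q => (f q, g q)) (μ.prod (μ.prod (μ.prod μ))) (μ.prod μ)) :
      ∀ᵐ q ∂μ.prod (μ.prod (μ.prod μ)), f q ≠ g q :=
    h.quasiMeasurePreserving.ae (ae_fst_ne_snd μ)
  have id₁ := MeasurePreserving.id μ
  have fst₂ := measurePreserving_fst (μ := μ) (ν := μ)
  have snd₂ := measurePreserving_snd (μ := μ) (ν := μ)
  have fst₃ := measurePreserving_fst (μ := μ) (ν := μ.prod μ)
  have snd₃ := measurePreserving_snd (μ := μ) (ν := μ.prod μ)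
  have snd₄ := measurePreserving_snd (μ := μ) (ν := μ.prod (μ.prod μ))
  filter_upwards [ae_ne (id₁.prod fst₃), ae_ne (id₁.prod (fst₂.comp snd₃)),
    ae_ne (id₁.prod (snd₂.comp snd₃)), ae_ne ((id₁.prod fst₂).comp snd₄),
    ae_ne ((id₁.prod snd₂).comp snd₄), ae_ne (snd₃.comp snd₄)] with q h12 h13 h14 h23 h24 h34
  simp only [id_eq, Function.comp_apply] at *
  simp [*]

lemma measure_eq_one_third_of_ae_exactlyOne {Ω : Type*} [MeasurableSpace Ω] {ν : Measure Ω}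
    [IsProbabilityMeasure ν] {s : Set Ω} {σ τ : Ω → Ω} (hs : NullMeasurableSet s ν)
    (hσ : MeasurePreserving σ ν ν) (hτ : MeasurePreserving τ ν ν)
    (h : ∀ᵐ ω ∂ν, ExactlyOne (ω ∈ s) (σ ω ∈ s) (τ ω ∈ s)) :
    ν s = 1 / 3 := by
  have disjoint₁ : AEDisjoint ν s (σ ⁻¹' s) :=
    measure_eq_zero_iff_ae_notMem.2 (h.mono fun _ hω => hω.2.1)
  have disjoint₂ : AEDisjoint ν (s ∪ σ ⁻¹' s) (τ ⁻¹' s) :=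
    measure_eq_zero_iff_ae_notMem.2 (h.mono fun _ hω ⟨h₁, h₂⟩ => h₁.elim
      (fun h₁ => hω.2.2.1 ⟨h₁, h₂⟩) fun h₁ => hω.2.2.2 ⟨h₁, h₂⟩)
  have cover : ν (s ∪ σ ⁻¹' s ∪ τ ⁻¹' s) = 1 := by
    rw [← measure_univ (μ := ν)]
    refine measure_congr (ae_eq_univ.2 (measure_eq_zero_iff_ae_notMem.2 (h.mono ?_)))
    rintro _ hω hnot
    exact hnot (by simpa [or_assoc] using hω.1)
  rw [measure_union₀ (hs.preimage hτ.quasiMeasurePreserving) disjoint₂,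
    measure_union₀ (hs.preimage hσ.quasiMeasurePreserving) disjoint₁,
    hσ.measure_preimage hs, hτ.measure_preimage hs] at cover
  rw [ENNReal.eq_div_iff three_ne_zero ENNReal.ofNat_ne_top, ← cover]
  ring

end Measure

lemma nullMeasurableSet_chordsMeetInDisc (μ : Measure unitCircle) [IsProbabilityMeasure μ]
    [NullSingletonClass μ] :
    NullMeasurableSet {q : unitCircle × unitCircle × unitCircle × unitCircle |
      ChordsMeetInDisc q.1 q.2.1 q.2.2.1 q.2.2.2} (μ.prod (μ.prod (μ.prod μ))) := by
  have hT : MeasurableSet {q : unitCircle × unitCircle × unitCircle × unitCircle |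
      signedArea q.1 q.2.1 q.2.2.1 * signedArea q.1 q.2.1 q.2.2.2 < 0} := by
    refine measurableSet_lt (Continuous.measurable ?_) measurable_const
    unfold signedArea
    fun_prop
  refine hT.nullMeasurableSet.congr ?_
  filter_upwards [ae_nodup_quadruple μ] with q hq
  simp only [List.nodup_cons, List.mem_cons, List.not_mem_nil, or_false, not_or,
    List.nodup_nil, and_true, not_false_eq_true] at hq
  obtain ⟨⟨h12, h13, -⟩, ⟨h23, -⟩, h34⟩ := hq
  exact propext (chordsMeetInDisc_iff (norm_coe_unitCircle _) (norm_coe_unitCircle _)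
    (Subtype.coe_ne_coe.2 h34) (signedArea_ne_zero (norm_coe_unitCircle _)
      (norm_coe_unitCircle _) (norm_coe_unitCircle _) (Subtype.coe_ne_coe.2 h12)
      (Subtype.coe_ne_coe.2 (Ne.symm h13)) (Subtype.coe_ne_coe.2 (Ne.symm h23)))).symm

/-- **Continuous measures are extremisers.** If `μ` is a Borel probability measure on the unit
circle with no atoms, then `P_μ(ℓ < 1) = 1/3`. -/
theorem probLT_one_eq_third_of_no_atoms (μ : Measure unitCircle) [IsProbabilityMeasure μ]
    (hμ : ∀ p : unitCircle, μ {p} = 0) :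
    probLT μ 1 = 1 / 3 := by
  have : NullSingletonClass μ := ⟨hμ⟩
  refine measure_eq_one_third_of_ae_exactlyOne (nullMeasurableSet_chordsMeetInDisc μ)
    (measurePreserving_swap_two_three μ) (measurePreserving_swap_two_four μ) ?_
  filter_upwards [ae_nodup_quadruple μ] with q hq
  exact chordsMeetInDisc_trichotomy hq

end
end

section
/- For every integer n ≥ 1 and all real numbers α₁, …, αₙ ∈ (0,1) with Σ_{i=1}^n αᵢ = 1, one has 2 Σᵢ αᵢ² − (8/3) Σᵢ αᵢ³ − 3 (Σᵢ αᵢ²)² + 4 Σᵢ αᵢ⁴ ≥ (1/100) · Σᵢ αᵢ². -/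
/-!
Let `t = α_{i₀}` be the largest coordinate and `r = Σ_{j ≠ i₀} α_j²`. The quartic and cubic terms
of the other coordinates enter as `Σ α_j² w(α_j)` with `w x = 4x² - 8x/3`; since every other
coordinate is at most `1 - t`, each `w(α_j)` is at least the minimum of `w` on `[0, 1 - t]`. What
is left is a quadratic in `r` with leading coefficient `-3` on the range
`0 ≤ r ≤ min(t, 1 - t)(1 - t)`, so by concavity it suffices to check its two endpoints, which are
polynomial inequalities in `t`.
-/

open Finset

theorem Finset.sum_pow_succ_le_mul_sum_pow {ι R : Type*} [CommSemiring R] [PartialOrder R]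
    [IsOrderedRing R] {s : Finset ι} {f : ι → R} {c : R} (hf : ∀ i ∈ s, 0 ≤ f i)
    (hc : ∀ i ∈ s, f i ≤ c) (k : ℕ) :
    ∑ i ∈ s, f i ^ (k + 1) ≤ c * ∑ i ∈ s, f i ^ k := by
  rw [mul_sum]
  refine sum_le_sum fun i hi => ?_
  rw [pow_succ']
  exact mul_le_mul_of_nonneg_right (hc i hi) (pow_nonneg (hf i hi) k)

theorem quadratic_nonneg_of_endpoints {a b c R r : ℝ} (hc : 0 ≤ c) (ha : 0 ≤ a)
    (hR : 0 ≤ a + b * R - c * R ^ 2) (hr0 : 0 ≤ r) (hrR : r ≤ R) :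
    0 ≤ a + b * r - c * r ^ 2 := by
  rcases hr0.eq_or_lt with rfl | hr
  · simpa using ha
  -- `R · f(r) = (R - r) f(0) + r f(R) + c r R (R - r)` for `f(x) = a + b x - c x²`.
  have key : 0 ≤ R * (a + b * r - c * r ^ 2) := by
    have hRr : 0 ≤ R - r := sub_nonneg.2 hrR
    nlinarith [mul_nonneg hRr ha, mul_nonneg hr.le hR, mul_nonneg (mul_nonneg hc hr.le) hRr,
      mul_nonneg (mul_nonneg (mul_nonneg hc hr.le) hRr) (hr.le.trans hrR)]
  exact nonneg_of_mul_nonneg_right key (hr.trans_le hrR)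

noncomputable def tailWeight (x : ℝ) : ℝ := 4 * x ^ 2 - 8 / 3 * x

theorem tailWeight_min_le {x v : ℝ} (hxv : x ≤ v) :
    tailWeight (min v (1 / 3)) ≤ tailWeight x := by
  unfold tailWeight
  rcases min_cases v (1 / 3) with ⟨hmin, hv⟩ | ⟨hmin, -⟩ <;> rw [hmin]
  · nlinarith [mul_nonneg (sub_nonneg.2 hxv) (by linarith : (0 : ℝ) ≤ 8 / 3 - 4 * (x + v))]
  · nlinarith [sq_nonneg (x - 1 / 3)]

theorem pow_four_sub_pow_three_add_sq_nonneg (t : ℝ) :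
    0 ≤ t ^ 4 - 8 / 3 * t ^ 3 + 199 / 100 * t ^ 2 := by
  nlinarith [sq_nonneg (t * (t - 4 / 3)), sq_nonneg t]

theorem quadratic_nonneg_at_tail_bound {t : ℝ} (ht0 : 0 ≤ t) (ht1 : t ≤ 1) :
    let R := min t (1 - t) * (1 - t)
    0 ≤ t ^ 4 - 8 / 3 * t ^ 3 + 199 / 100 * t ^ 2
      + (199 / 100 - 6 * t ^ 2 + tailWeight (min (1 - t) (1 / 3))) * R - 3 * R ^ 2 := by
  intro R
  simp only [R, tailWeight]
  rcases le_total t (1 / 2) with h | h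
  · rw [min_eq_left (show t ≤ 1 - t by linarith),
      min_eq_right (show (1 : ℝ) / 3 ≤ 1 - t by linarith)]
    nlinarith [mul_nonneg ht0 (sub_nonneg.2 h), mul_nonneg (mul_nonneg ht0 ht0) (sub_nonneg.2 h),
      mul_nonneg (mul_nonneg ht0 ht0) (mul_nonneg ht0 (sub_nonneg.2 h)), pow_nonneg ht0 3,
      pow_nonneg ht0 4]
  rw [min_eq_right (show 1 - t ≤ t by linarith)]
  rcases le_total t (2 / 3) with h' | h'
  · rw [min_eq_right (show (1 : ℝ) / 3 ≤ 1 - t by linarith)]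
    nlinarith [mul_nonneg (sub_nonneg.2 h) (sub_nonneg.2 h'), sq_nonneg (t - 1 / 2),
      sq_nonneg (t - 2 / 3)]
  · rw [min_eq_left (show 1 - t ≤ 1 / 3 by linarith)]
    have hu : 0 ≤ 1 - t := sub_nonneg.2 ht1
    have hv : 0 ≤ t - 2 / 3 := sub_nonneg.2 h'
    nlinarith [mul_nonneg hv hu, sq_nonneg (1 - t), mul_nonneg (mul_nonneg hv hu) hu,
      sq_nonneg ((t - 2 / 3) * (1 - t)), mul_nonneg (sq_nonneg (1 - t)) hv]

theorem simplex_quartic_lower_bound_general (n : ℕ)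
    (α : Fin n → ℝ) (hα : ∀ i, 0 < α i ∧ α i < 1) (hsum : ∑ i, α i = 1) :
    2 * ∑ i, α i ^ 2 - 8 / 3 * ∑ i, α i ^ 3 - 3 * (∑ i, α i ^ 2) ^ 2 + 4 * ∑ i, α i ^ 4 ≥
      1 / 100 * ∑ i, α i ^ 2 := by
  obtain ⟨i₀, -, hmax⟩ :=
    exists_max_image univ α (nonempty_of_sum_ne_zero (hsum.trans_ne one_ne_zero))
  set t := α i₀
  set s := univ.erase i₀
  have split (f : ℝ → ℝ) : ∑ i, f (α i) = f t + ∑ j ∈ s, f (α j) :=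
    (add_sum_erase _ (fun i => f (α i)) (mem_univ i₀)).symm
  have hs0 : ∀ j ∈ s, 0 ≤ α j := fun j _ => (hα j).1.le
  have htail : ∑ j ∈ s, α j = 1 - t := by
    have := split id
    simp only [id] at this
    linarith
  have hs1 : ∀ j ∈ s, α j ≤ 1 - t := fun j hj => htail ▸ single_le_sum hs0 hj
  have hr : ∑ j ∈ s, α j ^ 2 ≤ min t (1 - t) * (1 - t) := by
    simpa [htail] using sum_pow_succ_le_mul_sum_pow hs0
      (fun j hj => le_min (hmax j (mem_univ j)) (hs1 j hj)) 1
  have hweight : tailWeight (min (1 - t) (1 / 3)) * ∑ j ∈ s, α j ^ 2 ≤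
      4 * ∑ j ∈ s, α j ^ 4 - 8 / 3 * ∑ j ∈ s, α j ^ 3 := by
    rw [mul_sum, mul_sum, mul_sum, ← sum_sub_distrib]
    refine sum_le_sum fun j hj => ?_
    have := mul_le_mul_of_nonneg_right (tailWeight_min_le (hs1 j hj)) (sq_nonneg (α j))
    unfold tailWeight at this ⊢
    linarith
  have hquad := quadratic_nonneg_of_endpoints (by norm_num)
    (pow_four_sub_pow_three_add_sq_nonneg t)
    (quadratic_nonneg_at_tail_bound (hα i₀).1.le (hα i₀).2.le)
    (sum_nonneg fun j _ => sq_nonneg (α j)) hr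
  rw [split (· ^ 2), split (· ^ 3), split (· ^ 4)]
  linear_combination hquad + hweight

/-- **Improved lower bound (Lemma on the simplex).** For every `n ≥ 1` and all
`α₁, …, αₙ ∈ (0,1)` with `Σ αᵢ = 1`, one has
`2 Σ αᵢ² − (8/3) Σ αᵢ³ − 3 (Σ αᵢ²)² + 4 Σ αᵢ⁴ ≥ (1/100) Σ αᵢ²`. -/
theorem simplex_quartic_lower_bound (n : ℕ) (hn : 1 ≤ n)
    (α : Fin n → ℝ) (hα : ∀ i, 0 < α i ∧ α i < 1) (hsum : ∑ i, α i = 1) :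
    2 * ∑ i, α i ^ 2 - 8 / 3 * ∑ i, α i ^ 3 - 3 * (∑ i, α i ^ 2) ^ 2 + 4 * ∑ i, α i ^ 4 ≥
      1 / 100 * ∑ i, α i ^ 2 :=
  simplex_quartic_lower_bound_general n α hα hsum
end

section
/- For every r with 1/2 < r < sin(3π/14), the supremum over all Borel probability measures μ on S¹ of ∫_{S¹} μ(I_r(x)) dμ(x) equals 2/3. -/
/-
If `2 r² < 1` (as `r < sin (3π/14) < sin (π/4)`), the chord through `x, y ∈ S¹` meets the
closed `r`-disk only if its midpoint, whose squared distance to the origin is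
`(1 + ⟪x, y⟫) / 2`, does; hence only if `⟪x, y⟫ < 0`. No four vectors of the plane have pairwise
negative inner products, so "obtuse" is a `K₄`-free graph on the circle. For `n` independent
`μ`-random points, Turán's theorem bounds the expected number `n (n - 1) μ⊗μ(obtuse)` of ordered
obtuse pairs by `2 n² / 3`; letting `n → ∞` gives `μ⊗μ(obtuse) ≤ 2/3`. Conversely, when
`r ≥ 1/2` every side of an inscribed equilateral triangle meets the `r`-disk, so the uniform
measure on its vertices attains `2/3`.
-/

open MeasureTheory Real
open scoped ENNReal

noncomputable section

/-- The set of quadruples `(x₁,x₂,x₃,x₄) ∈ (S¹)⁴` for which some point `p` with `‖p‖ ≤ r`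
lies on both `aff(x₁,x₂)` and `aff(x₃,x₄)`. -/
def quadSetLE (r : ℝ) : Set (unitCircle × unitCircle × unitCircle × unitCircle) :=
  {q | ∃ p : Plane, ‖p‖ ≤ r ∧ p ∈ chordLine (q.1 : Plane) (q.2.1 : Plane) ∧
    p ∈ chordLine (q.2.2.1 : Plane) (q.2.2.2 : Plane)}

/-- `P_μ(ℓ ≤ r)`: the `μ⊗μ⊗μ⊗μ`-measure of `quadSetLE r`. -/
def probLE (μ : Measure unitCircle) (r : ℝ) : ℝ≥0∞ :=
  (μ.prod (μ.prod (μ.prod μ))) (quadSetLE r)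

/-- `I_r(x)`: the set of `y ∈ S¹` such that the line `aff(x,y)` meets the closed disk of
radius `r` centred at the origin. -/
def arcSet (r : ℝ) (x : unitCircle) : Set unitCircle :=
  {y | ∃ p : Plane, ‖p‖ ≤ r ∧ p ∈ chordLine (x : Plane) (y : Plane)}

open Finset

namespace SimpleGraph

variable {V W : Type*} {G : SimpleGraph V} {H : SimpleGraph W} {k r : ℕ}

theorem CliqueFree.of_hom (f : H →g G) (h : G.CliqueFree k) : H.CliqueFree k := by
  rw [cliqueFree_iff] at h ⊢
  exact ⟨fun c => h.false ((f.comp c.toHom).toCopy (Hom.injective_of_top_hom _))⟩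

theorem CliqueFree.mul_card_edgeFinset_le [Fintype V] [DecidableRel G.Adj]
    (h : G.CliqueFree (r + 1)) :
    2 * r * #G.edgeFinset ≤ (r - 1) * Fintype.card V ^ 2 := by
  rcases r.eq_zero_or_pos with rfl | hr
  · simp
  obtain ⟨T, _, hT⟩ := exists_isTuranMaximal (V := V) hr
  calc 2 * r * #G.edgeFinset ≤ 2 * r * #T.edgeFinset := Nat.mul_le_mul_left _ (hT.2 h)
    _ = 2 * r * #(turanGraph (Fintype.card V) r).edgeFinset := by
      rw [((isTuranMaximal_iff_nonempty_iso_turanGraph hr).mp hT).some.card_edgeFinset_eq]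
    _ ≤ (r - 1) * Fintype.card V ^ 2 := mul_card_edgeFinset_turanGraph_le

theorem sum_card_filter_adj [Fintype V] [DecidableRel G.Adj] :
    ∑ v, #{w | G.Adj v w} = 2 * #G.edgeFinset := by
  rw [← sum_degrees_eq_twice_card_edges]
  simp [← card_neighborFinset_eq_degree, neighborFinset_eq_filter]

open Classical in
theorem CliqueFree.mul_sum_card_adj_le (hG : G.CliqueFree (r + 1)) {n : ℕ}
    (x : Fin n → V) : r * ∑ i, #{j | G.Adj (x i) (x j)} ≤ (r - 1) * n ^ 2 := by
  have hsum : ∑ i, #{j | G.Adj (x i) (x j)} = 2 * #(G.comap x).edgeFinset :=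
    sum_card_filter_adj (G := G.comap x)
  have h := (hG.of_hom (Hom.comap x G)).mul_card_edgeFinset_le
  rw [Fintype.card_fin] at h
  rw [hsum]
  linarith

end SimpleGraph

open Filter Topology

theorem le_of_forall_nat_mul_mul_sub_one_le {b c : ℝ}
    (h : ∀ n : ℕ, b * n * (n - 1) ≤ c * n ^ 2) : b ≤ c := by
  have hlim : Tendsto (fun n : ℕ => b * (1 - (n : ℝ)⁻¹)) atTop (𝓝 b) := by
    simpa using
      (tendsto_const_nhds (x := (1 : ℝ)) |>.sub tendsto_inv_atTop_nhds_zero_nat).const_mul b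
  refine le_of_tendsto hlim (eventually_atTop.2 ⟨1, fun n hn => ?_⟩)
  have hn : (0 : ℝ) < n := by exact_mod_cast hn
  have hdiv : b * (n - 1) ≤ c * n := le_of_mul_le_mul_left (by nlinarith [h n]) hn
  rw [mul_one_sub, ← div_eq_mul_inv, sub_le_iff_le_add, ← sub_le_iff_le_add', le_div_iff₀ hn]
  linarith

namespace SimpleGraph

variable {α : Type*} [MeasurableSpace α] {G : SimpleGraph α}

theorem infinitePi_setOf_adj (hmeas : MeasurableSet {p : α × α | G.Adj p.1 p.2})
    (μ : Measure α) [IsProbabilityMeasure μ] (i j : ℕ) :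
    Measure.infinitePi (fun _ : ℕ => μ) {ω | G.Adj (ω i) (ω j)} =
      if i = j then 0 else (μ.prod μ) {p | G.Adj p.1 p.2} := by
  split_ifs with hij
  · subst hij; simp
  · rw [← Measure.infinitePi_map_eval_prod (P := fun _ => μ) hij,
      Measure.map_apply (by fun_prop) hmeas]
    rfl

open Classical in
theorem lintegral_infinitePi_sum_card_adj (hmeas : MeasurableSet {p : α × α | G.Adj p.1 p.2})
    (μ : Measure α) [IsProbabilityMeasure μ] (n : ℕ) :
    ∫⁻ ω : ℕ → α, ((∑ i : Fin n, #{j : Fin n | G.Adj (ω i) (ω j)} : ℕ) : ℝ≥0∞)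
        ∂Measure.infinitePi (fun _ : ℕ => μ) =
      n * (n - 1 : ℕ) * (μ.prod μ) {p | G.Adj p.1 p.2} := by
  have hmeas' : ∀ i j : ℕ, MeasurableSet {ω : ℕ → α | G.Adj (ω i) (ω j)} := fun i j =>
    hmeas.preimage (f := fun ω : ℕ → α => (ω i, ω j)) (by fun_prop)
  calc ∫⁻ ω : ℕ → α, ((∑ i : Fin n, #{j : Fin n | G.Adj (ω i) (ω j)} : ℕ) : ℝ≥0∞)
        ∂Measure.infinitePi (fun _ : ℕ => μ)
      = ∫⁻ ω, ∑ i : Fin n, ∑ j : Fin n, {ω : ℕ → α | G.Adj (ω i) (ω j)}.indicator 1 ω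
        ∂Measure.infinitePi (fun _ : ℕ => μ) := by
        refine lintegral_congr fun ω => ?_
        push_cast [Finset.natCast_card_filter]
        simp only [Set.indicator_apply, Set.mem_ofPred_eq, Pi.one_apply]
    _ = ∑ i : Fin n, ∑ j : Fin n, Measure.infinitePi (fun _ : ℕ => μ) {ω | G.Adj (ω i) (ω j)} := by
        rw [lintegral_finsetSum]
        · refine Finset.sum_congr rfl fun i _ => ?_
          rw [lintegral_finsetSum]
          · exact Finset.sum_congr rfl fun j _ => lintegral_indicator_one (hmeas' i j)
          · exact fun j _ => measurable_const.indicator (hmeas' i j)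
        · exact fun i _ => measurable_sum _ fun j _ => measurable_const.indicator (hmeas' i j)
    _ = _ := by
        simp [infinitePi_setOf_adj hmeas, Fin.val_inj, Finset.sum_ite, Finset.filter_ne, mul_assoc]

theorem CliqueFree.mul_prod_measure_adj_le {r : ℕ} (hG : G.CliqueFree (r + 1))
    (hmeas : MeasurableSet {p : α × α | G.Adj p.1 p.2}) (μ : Measure α) [IsProbabilityMeasure μ] :
    r * (μ.prod μ) {p | G.Adj p.1 p.2} ≤ (r - 1 : ℕ) := by
  classical
  set a := (μ.prod μ) {p | G.Adj p.1 p.2}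
  have hsample : ∀ n : ℕ, (r : ℝ≥0∞) * (n * (n - 1 : ℕ) * a) ≤ ((r - 1) * n ^ 2 : ℕ) := by
    intro n
    rw [← lintegral_infinitePi_sum_card_adj hmeas, ← lintegral_const_mul' _ _ (by simp)]
    calc ∫⁻ ω : ℕ → α, r * ((∑ i : Fin n, #{j : Fin n | G.Adj (ω i) (ω j)} : ℕ) : ℝ≥0∞)
          ∂Measure.infinitePi (fun _ : ℕ => μ)
        ≤ ∫⁻ _, ((r - 1 : ℕ) * n ^ 2 : ℕ) ∂Measure.infinitePi (fun _ : ℕ => μ) := by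
          refine lintegral_mono fun ω => ?_
          rw [← Nat.cast_mul]
          exact Nat.cast_le.mpr (hG.mul_sum_card_adj_le fun i : Fin n => ω i)
      _ = ((r - 1) * n ^ 2 : ℕ) := by simp
  have ha : a ≠ ⊤ := measure_ne_top _ _
  have hreal : (r : ℝ) * a.toReal ≤ (r - 1 : ℕ) := by
    refine le_of_forall_nat_mul_mul_sub_one_le fun n => ?_
    have := ENNReal.toReal_mono (ENNReal.natCast_ne_top _) (hsample n)
    rcases Nat.eq_zero_or_pos n with rfl | hn
    · simp
    simp only [ENNReal.toReal_mul, ENNReal.toReal_natCast] at this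
    push_cast [Nat.cast_sub hn] at this
    linarith
  rw [← ENNReal.toReal_le_toReal (by finiteness) (by simp)]
  rwa [ENNReal.toReal_mul, ENNReal.toReal_natCast, ENNReal.toReal_natCast]

end SimpleGraph

section DiracAverage

variable {α : Type*} [MeasurableSpace α] {k : ℕ}

def diracAverage (p : Fin k → α) : Measure α := (k : ℝ≥0∞)⁻¹ • ∑ i, Measure.dirac (p i)

variable (p : Fin k → α)

instance [NeZero k] : IsProbabilityMeasure (diracAverage p) :=
  ⟨by simp [diracAverage, ENNReal.inv_mul_cancel (NeZero.ne (k : ℝ≥0∞))]⟩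

theorem lintegral_diracAverage [MeasurableSingletonClass α] (f : α → ℝ≥0∞) :
    ∫⁻ x, f x ∂diracAverage p = (k : ℝ≥0∞)⁻¹ * ∑ i, f (p i) := by
  simp [diracAverage, lintegral_finsetSum_measure]

theorem sub_one_div_le_lintegral_diracAverage [MeasurableSingletonClass α] [NeZero k]
    (S : α → Set α) (hS : ∀ i j, i ≠ j → p j ∈ S (p i)) :
    ((k - 1 : ℕ) : ℝ≥0∞) / k ≤ ∫⁻ x, diracAverage p (S x) ∂diracAverage p := by
  have hmass : ∀ i, (k : ℝ≥0∞)⁻¹ * (k - 1 : ℕ) ≤ diracAverage p (S (p i)) := by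
    intro i
    rw [diracAverage, Measure.smul_apply, Measure.coe_finsetSum, Finset.sum_apply, smul_eq_mul]
    gcongr
    calc ((k - 1 : ℕ) : ℝ≥0∞) = ∑ j ∈ univ.erase i, 1 := by simp
      _ ≤ ∑ j ∈ univ.erase i, Measure.dirac (p j) (S (p i)) := sum_le_sum fun j hj =>
          (Measure.dirac_apply_of_mem (hS i j (ne_of_mem_erase hj).symm)).ge
      _ ≤ ∑ j, Measure.dirac (p j) (S (p i)) := sum_le_sum_of_subset (erase_subset _ _)
  calc ((k - 1 : ℕ) : ℝ≥0∞) / k = (k : ℝ≥0∞)⁻¹ * ∑ _i : Fin k, (k : ℝ≥0∞)⁻¹ * (k - 1 : ℕ) := by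
        rw [sum_const, card_univ, Fintype.card_fin, nsmul_eq_mul, ← mul_assoc,
          ENNReal.inv_mul_cancel (NeZero.ne _) (ENNReal.natCast_ne_top k), one_mul,
          ENNReal.div_eq_inv_mul]
    _ ≤ _ := by rw [lintegral_diracAverage]; gcongr with i; exact hmass i

end DiracAverage

theorem EuclideanSpace.inner_fin_two (x y : EuclideanSpace ℝ (Fin 2)) :
    inner ℝ x y = x 0 * y 0 + x 1 * y 1 := by
  simp [PiLp.inner_apply, Fin.sum_univ_two, mul_comm]

theorem not_pairwise_inner_neg_fin_four (v : Fin 4 → EuclideanSpace ℝ (Fin 2)) :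
    ¬ Pairwise fun i j => inner ℝ (v i) (v j) < 0 := by
  intro h
  have h01 := h (show (0 : Fin 4) ≠ 1 by decide)
  have h02 := h (show (0 : Fin 4) ≠ 2 by decide)
  have h03 := h (show (0 : Fin 4) ≠ 3 by decide)
  have h12 := h (show (1 : Fin 4) ≠ 2 by decide)
  have h13 := h (show (1 : Fin 4) ≠ 3 by decide)
  have h23 := h (show (2 : Fin 4) ≠ 3 by decide)
  simp only [EuclideanSpace.inner_fin_two] at h01 h02 h03 h12 h13 h23
  set w := v 3
  -- `cross u` is the determinant of `(u, w)`; Lagrange's identity gives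
  -- `cross u * cross u' = ⟪u, u'⟫ ‖w‖² - ⟪u, w⟫ ⟪u', w⟫`, which is negative for the pairs below.
  let cross (u : EuclideanSpace ℝ (Fin 2)) : ℝ := u 1 * w 0 - u 0 * w 1
  have lagrange (u u' : EuclideanSpace ℝ (Fin 2)) : cross u * cross u' =
      (u 0 * u' 0 + u 1 * u' 1) * (w 0 ^ 2 + w 1 ^ 2) -
        (u 0 * w 0 + u 1 * w 1) * (u' 0 * w 0 + u' 1 * w 1) := by
    ring
  have c01 : cross (v 0) * cross (v 1) < 0 := by
    rw [lagrange]; nlinarith [mul_pos_of_neg_of_neg h03 h13, sq_nonneg (w 0), sq_nonneg (w 1)]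
  have c02 : cross (v 0) * cross (v 2) < 0 := by
    rw [lagrange]; nlinarith [mul_pos_of_neg_of_neg h03 h23, sq_nonneg (w 0), sq_nonneg (w 1)]
  have c12 : cross (v 1) * cross (v 2) < 0 := by
    rw [lagrange]; nlinarith [mul_pos_of_neg_of_neg h13 h23, sq_nonneg (w 0), sq_nonneg (w 1)]
  nlinarith [sq_nonneg (cross (v 0) * cross (v 1) * cross (v 2)), mul_pos_of_neg_of_neg c01 c02]

def obtuseGraph (E : Type*) [NormedAddCommGroup E] [InnerProductSpace ℝ E] : SimpleGraph E where
  Adj x y := inner ℝ x y < 0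
  symm := ⟨fun x y h => by rwa [real_inner_comm]⟩
  loopless := ⟨fun _ => real_inner_self_nonneg.not_gt⟩

theorem obtuseGraph_cliqueFree_four : (obtuseGraph (EuclideanSpace ℝ (Fin 2))).CliqueFree 4 := by
  refine SimpleGraph.cliqueFree_iff.2 ⟨fun c => not_pairwise_inner_neg_fin_four c fun i j hij => ?_⟩
  exact c.toHom.map_adj (G := ⊤) (by simpa using hij)

section Chords

variable {E : Type*} [NormedAddCommGroup E] [InnerProductSpace ℝ E]

theorem one_add_inner_le_two_mul_norm_sq_of_mem_affineSpan_pair {x y p : E} (hx : ‖x‖ = 1)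
    (hy : ‖y‖ = 1) (hp : p ∈ line[ℝ, x, y]) : 1 + inner ℝ x y ≤ 2 * ‖p‖ ^ 2 := by
  obtain ⟨s, rfl⟩ := mem_affineSpan_pair_iff_exists_lineMap_eq.1 hp
  have hxy : inner ℝ x y ≤ 1 := by simpa [hx, hy] using real_inner_le_norm x y
  have hnorm : ‖AffineMap.lineMap x y s‖ ^ 2 =
      (1 - s) ^ 2 + s ^ 2 + 2 * s * (1 - s) * inner ℝ x y := by
    rw [AffineMap.lineMap_apply_module, norm_add_sq_real, norm_smul, norm_smul, inner_smul_left,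
      inner_smul_right, mul_pow, mul_pow, hx, hy, Real.norm_eq_abs, Real.norm_eq_abs, sq_abs,
      sq_abs, RCLike.conj_to_real]
    ring
  -- the distance to the origin along the chord is smallest at its midpoint `s = 1/2`
  nlinarith [mul_nonneg (sq_nonneg (2 * s - 1)) (sub_nonneg.2 hxy)]

end Chords

theorem inner_neg_of_mem_arcSet {r : ℝ} (hr : 2 * r ^ 2 < 1) {x y : unitCircle}
    (hy : y ∈ arcSet r x) : inner ℝ (x : Plane) y < 0 := by
  obtain ⟨p, hpr, hp⟩ := hy
  have hx1 : ‖(x : Plane)‖ = 1 := mem_sphere_zero_iff_norm.1 x.2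
  have hy1 : ‖(y : Plane)‖ = 1 := mem_sphere_zero_iff_norm.1 y.2
  have hp2 : ‖p‖ ^ 2 ≤ r ^ 2 := pow_le_pow_left₀ (norm_nonneg p) hpr 2
  unfold chordLine at hp
  split_ifs at hp with hxy
  · have : (1 : ℝ) ≤ ‖p‖ := by
      simpa [show inner ℝ p (x : Plane) = 1 from hp, hx1] using real_inner_le_norm p (x : Plane)
    nlinarith
  · nlinarith [one_add_inner_le_two_mul_norm_sq_of_mem_affineSpan_pair hx1 hy1 hp]

theorem mem_arcSet_of_ne_of_norm_add_le {r : ℝ} {x y : unitCircle} (hxy : x ≠ y)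
    (h : ‖(x : Plane) + y‖ ≤ 2 * r) : y ∈ arcSet r x := by
  refine ⟨midpoint ℝ (x : Plane) y, ?_, ?_⟩
  · rw [midpoint_eq_smul_add, norm_smul, invOf_eq_inv, norm_inv, Real.norm_two]
    linarith
  · rw [chordLine, if_neg (Subtype.coe_injective.ne hxy)]
    exact AffineMap.lineMap_mem_affineSpan_pair _ _ _

theorem sin_three_pi_div_fourteen_lt : Real.sin (3 * π / 14) < √2 / 2 := by
  rw [← Real.sin_pi_div_four]
  apply Real.sin_lt_sin_of_lt_of_le_pi_div_two <;> linarith [Real.pi_pos]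

def triangleVertex : Fin 3 → Plane := ![!₂[1, 0], !₂[-1 / 2, √3 / 2], !₂[-1 / 2, -(√3 / 2)]]

theorem inner_triangleVertex (i j : Fin 3) :
    inner ℝ (triangleVertex i) (triangleVertex j) = if i = j then 1 else -1 / 2 := by
  have h3 : √3 ^ 2 = 3 := Real.sq_sqrt (by norm_num)
  rw [EuclideanSpace.inner_fin_two]
  fin_cases i <;> fin_cases j <;> simp [triangleVertex] <;> nlinarith

def circleTriangle (i : Fin 3) : unitCircle :=
  ⟨triangleVertex i, by
    rw [unitCircle, mem_sphere_zero_iff_norm, norm_eq_sqrt_real_inner, inner_triangleVertex,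
      if_pos rfl, Real.sqrt_one]⟩

theorem mem_arcSet_circleTriangle {r : ℝ} (hr : 1 / 2 ≤ r) {i j : Fin 3} (hij : i ≠ j) :
    circleTriangle j ∈ arcSet r (circleTriangle i) := by
  refine mem_arcSet_of_ne_of_norm_add_le (fun h => ?_) ?_
  · have hv : triangleVertex i = triangleVertex j := congrArg Subtype.val h
    have := inner_triangleVertex i j
    rw [← hv, inner_triangleVertex, if_pos rfl, if_neg hij] at this
    norm_num at this
  · have hsq : ‖triangleVertex i + triangleVertex j‖ ^ 2 = 1 := by
      rw [norm_add_sq_real, ← real_inner_self_eq_norm_sq, ← real_inner_self_eq_norm_sq,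
        inner_triangleVertex, inner_triangleVertex, inner_triangleVertex, if_pos rfl, if_pos rfl,
        if_neg hij]
      norm_num
    have : ‖triangleVertex i + triangleVertex j‖ = 1 := by
      rwa [pow_eq_one_iff_of_nonneg (norm_nonneg _) two_ne_zero] at hsq
    change ‖triangleVertex i + triangleVertex j‖ ≤ 2 * r
    linarith

theorem measurableSet_inner_neg :
    MeasurableSet {p : unitCircle × unitCircle | inner ℝ (p.1 : Plane) p.2 < 0} :=
  measurableSet_lt (by fun_prop) measurable_const

theorem prod_measure_inner_neg_le_two_thirds (μ : Measure unitCircle) [IsProbabilityMeasure μ] :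
    (μ.prod μ) {p : unitCircle × unitCircle | inner ℝ (p.1 : Plane) p.2 < 0} ≤ 2 / 3 := by
  have h := (obtuseGraph_cliqueFree_four.of_hom
    (SimpleGraph.Hom.comap ((↑) : unitCircle → Plane) _)).mul_prod_measure_adj_le (r := 3)
    measurableSet_inner_neg μ
  norm_num at h
  rw [ENNReal.le_div_iff_mul_le (by norm_num) (by norm_num), mul_comm]
  exact h

/-- **The one-chord problem just above 1/2.** For every `r` with `1/2 < r < sin(3π/14)`, the
supremum over all Borel probability measures `μ` on the unit circle of `∫ μ(I_r(x)) dμ(x)`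
equals `2/3`. -/
theorem one_chord_sup_eq_two_thirds (r : ℝ) (hr0 : 1 / 2 < r)
    (hr1 : r < Real.sin (3 * π / 14)) :
    (⨆ (μ : Measure unitCircle) (_ : IsProbabilityMeasure μ),
        ∫⁻ x, μ (arcSet r x) ∂μ) = 2 / 3 := by
  have hr : 2 * r ^ 2 < 1 := by
    have hsqrt : √2 ^ 2 = 2 := Real.sq_sqrt zero_le_two
    nlinarith [sin_three_pi_div_fourteen_lt]
  refine le_antisymm (iSup₂_le fun μ _ => ?_) ?_
  · calc ∫⁻ x, μ (arcSet r x) ∂μ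
        ≤ ∫⁻ x, μ (Prod.mk x ⁻¹' {p : unitCircle × unitCircle | inner ℝ (p.1 : Plane) p.2 < 0})
          ∂μ := lintegral_mono fun x => measure_mono fun y => inner_neg_of_mem_arcSet hr
      _ = (μ.prod μ) {p | inner ℝ (p.1 : Plane) p.2 < 0} :=
          (Measure.prod_apply measurableSet_inner_neg).symm
      _ ≤ 2 / 3 := prod_measure_inner_neg_le_two_thirds μ
  · refine le_iSup₂_of_le (diracAverage circleTriangle) inferInstance ?_
    calc (2 : ℝ≥0∞) / 3 = ((3 - 1 : ℕ) : ℝ≥0∞) / (3 : ℕ) := by norm_num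
      _ ≤ _ := sub_one_div_le_lintegral_diracAverage _ _ fun i j hij =>
          mem_arcSet_circleTriangle hr0.le hij

end
end

section
/- For every r ∈ [0,1] there exists a Borel probability measure ν_r on S¹ such that P_{ν_r}(ℓ ≤ r) = sup_μ P_μ(ℓ ≤ r), the supremum taken over all Borel probability measures μ on S¹. -/
open MeasureTheory Real
open scoped ENNReal

noncomputable section

/-! The Borel probability measures on the compact metric space `S¹` form a weakly compact space
(Prokhorov), on which `μ ↦ μ ⊗ μ ⊗ μ ⊗ μ` is continuous; by the portmanteau theorem the mass
of a closed set is upper semicontinuous in the weak topology, so `μ ↦ P_μ(ℓ ≤ r)` attains its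
supremum as soon as the set of admissible quadruples is closed. That set is the projection,
along the compact disk of radius `r`, of a closed set cut out by polynomial equations. -/

namespace MeasureTheory

namespace ProbabilityMeasure

variable {Ω : Type*} [MeasurableSpace Ω] [TopologicalSpace Ω]

lemma upperSemicontinuous_apply_of_isClosed [OpensMeasurableSpace Ω] [HasOuterApproxClosed Ω]
    {F : Set Ω} (hF : IsClosed F) :
    UpperSemicontinuous fun μ : ProbabilityMeasure Ω ↦ (μ : Measure Ω) F :=
  upperSemicontinuous_iff_limsup_le.2 fun _ ↦
    limsup_measure_closed_le_of_tendsto Filter.tendsto_id hF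

def fourfold (μ : ProbabilityMeasure Ω) : ProbabilityMeasure (Ω × Ω × Ω × Ω) :=
  μ.prod (μ.prod (μ.prod μ))

lemma continuous_fourfold [SecondCountableTopology Ω] [TopologicalSpace.PseudoMetrizableSpace Ω]
    [OpensMeasurableSpace Ω] : Continuous (fourfold (Ω := Ω)) := by
  unfold fourfold
  fun_prop

lemma exists_forall_fourfold_apply_le [TopologicalSpace.MetrizableSpace Ω] [BorelSpace Ω]
    [CompactSpace Ω] [Nonempty Ω] {F : Set (Ω × Ω × Ω × Ω)} (hF : IsClosed F) :
    ∃ ν : ProbabilityMeasure Ω, ∀ μ : ProbabilityMeasure Ω,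
      (fourfold μ : Measure _) F ≤ (fourfold ν : Measure _) F := by
  have : Nonempty (ProbabilityMeasure Ω) :=
    ⟨⟨Measure.dirac (Classical.arbitrary Ω), inferInstance⟩⟩
  obtain ⟨ν, -, hν⟩ := (((upperSemicontinuous_apply_of_isClosed hF).comp
    continuous_fourfold).upperSemicontinuousOn _).exists_isMaxOn Set.univ_nonempty isCompact_univ
  exact ⟨ν, fun μ ↦ hν (Set.mem_univ μ)⟩

end ProbabilityMeasure

theorem exists_fourfold_measure_apply_eq_iSup {Ω : Type*} [MeasurableSpace Ω]
    [TopologicalSpace Ω] [TopologicalSpace.MetrizableSpace Ω] [BorelSpace Ω]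
    [CompactSpace Ω] [Nonempty Ω] {F : Set (Ω × Ω × Ω × Ω)} (hF : IsClosed F) :
    ∃ ν : Measure Ω, IsProbabilityMeasure ν ∧ ν.prod (ν.prod (ν.prod ν)) F =
      ⨆ (μ : Measure Ω) (_ : IsProbabilityMeasure μ), μ.prod (μ.prod (μ.prod μ)) F := by
  obtain ⟨ν, hν⟩ := ProbabilityMeasure.exists_forall_fourfold_apply_le hF
  refine ⟨ν, inferInstance, le_antisymm ?_ (iSup₂_le fun μ hμ ↦ hν ⟨μ, hμ⟩)⟩
  exact le_iSup₂ (f := fun μ (_ : IsProbabilityMeasure μ) ↦ μ.prod (μ.prod (μ.prod μ)) F)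
    (ν : Measure Ω) ν.2

end MeasureTheory

def cross (a b : Plane) : ℝ := a 0 * b 1 - a 1 * b 0

lemma exists_eq_smul_of_cross_eq_zero {u v : Plane} (hv : v ≠ 0) (h : cross u v = 0) :
    ∃ t : ℝ, u = t • v := by
  have hc : u 0 * v 1 = u 1 * v 0 := sub_eq_zero.1 h
  by_cases h0 : v 0 = 0
  · have h1 : v 1 ≠ 0 := fun h1 ↦ hv (by ext i; fin_cases i <;> simp [h0, h1])
    refine ⟨u 1 / v 1, ?_⟩
    ext i
    fin_cases i
    · simpa [h0, h1] using hc
    · simp [div_mul_cancel₀ _ h1]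
  · refine ⟨u 0 / v 0, ?_⟩
    ext i
    fin_cases i
    · simp [div_mul_cancel₀ _ h0]
    · simp only [Fin.mk_one, PiLp.smul_apply, smul_eq_mul]
      rw [div_mul_eq_mul_div, eq_div_iff h0, ← hc]

/-- The tangent case `x = y` is covered by the second equation alone, and the chord case
`x ≠ y` by the first one (the second then holds automatically on the circle). -/
lemma mem_chordLine_iff {x y p : Plane} (hx : ‖x‖ = 1) (hy : ‖y‖ = 1) :
    p ∈ chordLine x y ↔ cross (p - x) (y - x) = 0 ∧ inner ℝ p (x + y) = 1 + inner ℝ x y := by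
  by_cases hxy : x = y
  · subst hxy
    have hxx : inner ℝ x x = (1 : ℝ) := by rw [real_inner_self_eq_norm_sq, hx, one_pow]
    simp only [chordLine, ↓reduceIte, Set.mem_ofPred_eq, sub_self, inner_add_right, hxx]
    simp only [cross, PiLp.zero_apply, mul_zero, sub_self, true_and]
    constructor <;> intro h <;> linarith
  · simp only [chordLine, if_neg hxy, SetLike.mem_coe, mem_affineSpan_pair_iff_exists_lineMap_eq,
      AffineMap.lineMap_apply, vsub_eq_sub, vadd_eq_add]
    constructor
    · rintro ⟨t, rfl⟩
      refine ⟨by simp only [cross, add_sub_cancel_right, PiLp.smul_apply, smul_eq_mul]; ring, ?_⟩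
      simp only [inner_add_left, inner_smul_left, inner_sub_left, inner_add_right,
        real_inner_self_eq_norm_sq, hx, hy, real_inner_comm x y, RCLike.conj_to_real]
      ring
    · rintro ⟨h, -⟩
      obtain ⟨t, ht⟩ := exists_eq_smul_of_cross_eq_zero (sub_ne_zero.2 (Ne.symm hxy)) h
      exact ⟨t, by rw [← ht, sub_add_cancel]⟩

def chordIncidence : Set (Plane × Plane × Plane) :=
  {z | cross (z.2.2 - z.1) (z.2.1 - z.1) = 0 ∧ inner ℝ z.2.2 (z.1 + z.2.1) = 1 + inner ℝ z.1 z.2.1}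

lemma isClosed_chordIncidence : IsClosed chordIncidence := by
  refine (isClosed_eq ?_ continuous_const).inter (isClosed_eq ?_ ?_)
  · unfold cross; fun_prop
  · fun_prop
  · fun_prop

instance : CompactSpace unitCircle :=
  isCompact_iff_compactSpace.1 (isCompact_sphere 0 1)

lemma isClosed_quadSetLE (r : ℝ) : IsClosed (quadSetLE r) := by
  let C : Set ((unitCircle × unitCircle × unitCircle × unitCircle) × Plane) := {z | ‖z.2‖ ≤ r ∧
    ((z.1.1 : Plane), (z.1.2.1 : Plane), z.2) ∈ chordIncidence ∧
    ((z.1.2.2.1 : Plane), (z.1.2.2.2 : Plane), z.2) ∈ chordIncidence}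
  have hC : IsClosed C := by
    refine (isClosed_le (f := fun z : _ × Plane ↦ ‖z.2‖) ?_ continuous_const).inter
      ((isClosed_chordIncidence.preimage ?_).inter (isClosed_chordIncidence.preimage ?_)) <;>
    fun_prop
  have hCcompact : IsCompact C :=
    (isCompact_univ.prod (isCompact_closedBall 0 r)).of_isClosed_subset hC
      fun z hz ↦ ⟨trivial, mem_closedBall_zero_iff.2 hz.1⟩
  have hnorm (x : unitCircle) : ‖(x : Plane)‖ = 1 := mem_sphere_zero_iff_norm.1 x.2
  have : quadSetLE r = Prod.fst '' C := by
    ext q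
    simp only [quadSetLE, chordIncidence, Set.mem_ofPred_eq, mem_chordLine_iff (hnorm _) (hnorm _),
      Set.mem_image, Prod.exists, exists_and_right, exists_eq_right, C]
  rw [this]
  exact (hCcompact.image continuous_fst).isClosed

instance : Nonempty unitCircle :=
  ⟨⟨EuclideanSpace.single 0 1, by simp [unitCircle]⟩⟩

theorem exists_maximiser_probLE_general (r : ℝ) :
    ∃ νr : Measure unitCircle, IsProbabilityMeasure νr ∧
      probLE νr r = ⨆ (μ : Measure unitCircle) (_ : IsProbabilityMeasure μ), probLE μ r :=
  exists_fourfold_measure_apply_eq_iSup (isClosed_quadSetLE r)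

/-- **Existence of extremisers for the closed problem.** For every `r ∈ [0,1]` there is a
Borel probability measure `ν_r` on the unit circle with
`P_{ν_r}(ℓ ≤ r) = sup_μ P_μ(ℓ ≤ r)`. -/
theorem exists_maximiser_probLE (r : ℝ) (hr0 : 0 ≤ r) (hr1 : r ≤ 1) :
    ∃ νr : Measure unitCircle, IsProbabilityMeasure νr ∧
      probLE νr r = ⨆ (μ : Measure unitCircle) (_ : IsProbabilityMeasure μ), probLE μ r :=
  exists_maximiser_probLE_general r

end
end

section
/- Fix r ∈ [0,1] and let F_r ⊆ (S¹)⁴ be the set of quadruples (x₁,x₂,x₃,x₄) for which there exists p ∈ ℝ² with ‖p‖₂ ≤ r lying on both aff(x₁,x₂) and aff(x₃,x₄), and write G_r(λ) = (λ⊗λ⊗λ⊗λ)(F_r). Suppose the Borel probability measure μ on S¹ is a local maximum of G_r, in the sense that there exists ε₀ > 0 such that for every ε ∈ (0, ε₀) and every Borel probability measure ν on S¹, G_r((1−ε)μ + εν) ≤ G_r(μ). Then for every Borel probability measure ν on S¹, (ν⊗μ⊗μ⊗μ)(F_r) ≤ G_r(μ). -/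
open MeasureTheory Real
open scoped ENNReal

noncomputable section

/-!
Write `μ_ε = (1 - ε)μ + εν`. Expanding `G_r(μ_ε)` multilinearly and discarding the terms of order
at least two in `ε` gives `(1 - ε)⁴ G_r(μ) + 4ε(1 - ε)³ (ν⊗μ⊗μ⊗μ)(F_r) ≤ G_r(μ_ε) ≤ G_r(μ)`; the
four first-order terms coincide because `F_r` is invariant under swapping the two points of a chord
and under swapping the two chords. Since `1 - (1 - ε)⁴ ≤ 4ε`, this yields
`(1 - ε)³ (ν⊗μ⊗μ⊗μ)(F_r) ≤ G_r(μ)`, and `ε → 0` finishes the proof.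
-/

namespace MeasureTheory.Measure

variable {α β : Type*} [MeasurableSpace α] [MeasurableSpace β]

theorem prod_add_le_add_prod_of_add_le {P Q : Measure α} {L M T : Measure β} [SFinite L]
    [SFinite M] [SFinite T] [SFinite P] [SFinite Q] (h : L + M ≤ T) :
    P.prod L + (P.prod M + Q.prod L) ≤ (P + Q).prod T := by
  rw [add_prod, ← add_assoc, ← prod_add]
  exact add_le_add (prod_mono le_rfl h)
    (prod_mono le_rfl ((Measure.le_add_right le_rfl).trans h))

theorem prod_four_add_first_order_le (P Q : Measure α) [SFinite P] [SFinite Q] :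
    P.prod (P.prod (P.prod P)) + (P.prod (P.prod (P.prod Q)) + P.prod (P.prod (Q.prod P))
      + P.prod (Q.prod (P.prod P)) + Q.prod (P.prod (P.prod P)))
      ≤ (P + Q).prod ((P + Q).prod ((P + Q).prod (P + Q))) := by
  have h2 := prod_add_le_add_prod_of_add_le (P := P) (Q := Q) (le_refl (P + Q))
  have h3 := prod_add_le_add_prod_of_add_le (P := P) (Q := Q) h2
  have h4 := prod_add_le_add_prod_of_add_le (P := P) (Q := Q) h3
  simpa only [prod_add, add_assoc] using h4

end MeasureTheory.Measure

namespace MeasurableEquiv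

variable {α β γ δ : Type*} [MeasurableSpace α] [MeasurableSpace β] [MeasurableSpace γ]
  [MeasurableSpace δ]

def prodLeftComm : α × β × γ ≃ᵐ β × α × γ :=
  prodAssoc.symm.trans ((prodComm.prodCongr (refl γ)).trans prodAssoc)

@[simp] theorem prodLeftComm_apply (a : α) (b : β) (c : γ) :
    prodLeftComm (a, b, c) = (b, a, c) := rfl

def prodPairsComm : α × β × γ × δ ≃ᵐ γ × δ × α × β :=
  prodAssoc.symm.trans (prodComm.trans prodAssoc)

@[simp] theorem prodPairsComm_apply (a : α) (b : β) (c : γ) (d : δ) :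
    prodPairsComm (a, b, c, d) = (c, d, a, b) := rfl

end MeasurableEquiv

namespace MeasureTheory

variable {α β γ δ : Type*} [MeasurableSpace α] [MeasurableSpace β] [MeasurableSpace γ]
  [MeasurableSpace δ]

theorem measurePreserving_prodLeftComm (μa : Measure α) (μb : Measure β) (μc : Measure γ)
    [SFinite μa] [SFinite μb] [SFinite μc] :
    MeasurePreserving MeasurableEquiv.prodLeftComm (μa.prod (μb.prod μc))
      (μb.prod (μa.prod μc)) :=
  (measurePreserving_prodAssoc μb μa μc).comp
    ((Measure.measurePreserving_swap.prod (.id μc)).comp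
      ((measurePreserving_prodAssoc μa μb μc).symm _))

theorem measurePreserving_prodPairsComm (μa : Measure α) (μb : Measure β) (μc : Measure γ)
    (μd : Measure δ) [SFinite μa] [SFinite μb] [SFinite μc] [SFinite μd] :
    MeasurePreserving MeasurableEquiv.prodPairsComm (μa.prod (μb.prod (μc.prod μd)))
      (μc.prod (μd.prod (μa.prod μb))) :=
  (measurePreserving_prodAssoc μc μd _).comp
    (Measure.measurePreserving_swap.comp ((measurePreserving_prodAssoc μa μb _).symm _))

end MeasureTheory

open Filter Topology

theorem chordLine_comm (x y : Plane) : chordLine x y = chordLine y x := by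
  unfold chordLine
  by_cases h : x = y
  · subst h; rfl
  · rw [if_neg h, if_neg (Ne.symm h), Set.pair_comm]

theorem preimage_prodLeftComm_quadSetLE (r : ℝ) :
    MeasurableEquiv.prodLeftComm ⁻¹' quadSetLE r = quadSetLE r := by
  ext ⟨x₁, x₂, x₃, x₄⟩
  simp only [Set.mem_preimage, MeasurableEquiv.prodLeftComm_apply, quadSetLE, Set.mem_ofPred_eq,
    chordLine_comm (x₂ : Plane)]

theorem preimage_prodPairsComm_quadSetLE (r : ℝ) :
    MeasurableEquiv.prodPairsComm ⁻¹' quadSetLE r = quadSetLE r := by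
  ext ⟨x₁, x₂, x₃, x₄⟩
  exact ⟨fun ⟨p, hp, h₁₂, h₃₄⟩ => ⟨p, hp, h₃₄, h₁₂⟩,
    fun ⟨p, hp, h₃₄, h₁₂⟩ => ⟨p, hp, h₁₂, h₃₄⟩⟩

section

variable (r : ℝ) (μ₁ μ₂ μ₃ μ₄ : Measure unitCircle) [SFinite μ₁] [SFinite μ₂] [SFinite μ₃]
  [SFinite μ₄]

theorem prod_quadSetLE_comm_left :
    (μ₁.prod (μ₂.prod (μ₃.prod μ₄))) (quadSetLE r) =
      (μ₂.prod (μ₁.prod (μ₃.prod μ₄))) (quadSetLE r) := by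
  rw [← (measurePreserving_prodLeftComm μ₁ μ₂ (μ₃.prod μ₄)).measure_preimage_equiv,
    preimage_prodLeftComm_quadSetLE]

theorem prod_quadSetLE_comm_pairs :
    (μ₁.prod (μ₂.prod (μ₃.prod μ₄))) (quadSetLE r) =
      (μ₃.prod (μ₄.prod (μ₁.prod μ₂))) (quadSetLE r) := by
  rw [← (measurePreserving_prodPairsComm μ₁ μ₂ μ₃ μ₄).measure_preimage_equiv,
    preimage_prodPairsComm_quadSetLE]

end

theorem probLE_smul_add_smul_lower_bound (r : ℝ) (μ ν : Measure unitCircle) [SFinite μ]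
    [SFinite ν] (a b : ℝ≥0∞) :
    a ^ 4 * probLE μ r + 4 * a ^ 3 * b * (ν.prod (μ.prod (μ.prod μ))) (quadSetLE r) ≤
      probLE (a • μ + b • ν) r := by
  have h :=
    Measure.le_iff'.mp (Measure.prod_four_add_first_order_le (a • μ) (b • ν)) (quadSetLE r)
  simp only [Measure.add_apply, Measure.prod_smul_left, Measure.prod_smul_right,
    Measure.smul_apply, smul_eq_mul] at h
  rw [prod_quadSetLE_comm_pairs r μ μ μ ν, prod_quadSetLE_comm_left r μ ν,
    prod_quadSetLE_comm_pairs r μ μ ν μ] at h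
  unfold probLE
  calc _ = _ := by ring
    _ ≤ _ := h

theorem le_of_forall_small_mixture_le {A M ε₀ : ℝ} (hε₀ : 0 < ε₀) (hM : 0 ≤ M)
    (h : ∀ ε, 0 < ε → ε < ε₀ → ε < 1 → (1 - ε) ^ 4 * M + 4 * (1 - ε) ^ 3 * ε * A ≤ M) :
    A ≤ M := by
  have hsmall : ∀ᶠ ε in 𝓝[>] 0, (1 - ε) ^ 3 * A ≤ M := by
    filter_upwards [Ioo_mem_nhdsGT (lt_min hε₀ one_pos)] with ε ⟨hε, hεmin⟩
    have hε₁ : ε < 1 := hεmin.trans_le (min_le_right _ _)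
    have hmix := h ε hε (hεmin.trans_le (min_le_left _ _)) hε₁
    -- `1 - (1 - ε)^4 = 4ε - ε²(6 - 4ε + ε²) ≤ 4ε`
    have hgain : (1 - (1 - ε) ^ 4) * M ≤ 4 * ε * M :=
      mul_le_mul_of_nonneg_right (by nlinarith [sq_nonneg ε, sq_nonneg (2 - ε)]) hM
    refine le_of_mul_le_mul_left ?_ (by positivity : 0 < 4 * ε)
    linarith
  have hlim : Tendsto (fun ε : ℝ => (1 - ε) ^ 3 * A) (𝓝[>] 0) (𝓝 A) := by
    have : Continuous fun ε : ℝ => (1 - ε) ^ 3 * A := by fun_prop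
    simpa using (this.tendsto 0).mono_left nhdsWithin_le_nhds
  exact le_of_tendsto hlim hsmall

theorem local_max_quad_inequality_general (r : ℝ)
    (μ : Measure unitCircle) [IsProbabilityMeasure μ]
    (hlocal : ∃ ε₀ : ℝ, 0 < ε₀ ∧
      ∀ ε : ℝ, 0 < ε → ε < ε₀ →
        ∀ (ν : Measure unitCircle), IsProbabilityMeasure ν →
          probLE (ENNReal.ofReal (1 - ε) • μ + ENNReal.ofReal ε • ν) r ≤ probLE μ r) :
    ∀ (ν : Measure unitCircle), IsProbabilityMeasure ν →
      (ν.prod (μ.prod (μ.prod μ))) (quadSetLE r) ≤ probLE μ r := by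
  obtain ⟨ε₀, hε₀, hmax⟩ := hlocal
  intro ν hν
  have hA : (ν.prod (μ.prod (μ.prod μ))) (quadSetLE r) ≠ ∞ := measure_ne_top _ _
  have hM : probLE μ r ≠ ∞ := measure_ne_top _ _
  rw [← ENNReal.toReal_le_toReal hA hM]
  refine le_of_forall_small_mixture_le hε₀ ENNReal.toReal_nonneg fun ε hε hεε₀ hε₁ => ?_
  have hmix := (probLE_smul_add_smul_lower_bound r μ ν _ _).trans (hmax ε hε hεε₀ ν hν)
  rw [← ENNReal.ofReal_le_ofReal_iff ENNReal.toReal_nonneg, ENNReal.ofReal_toReal hM]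
  have h1ε : 0 ≤ 1 - ε := by linarith
  refine (le_of_eq ?_).trans hmix
  rw [ENNReal.ofReal_add (by positivity) (by positivity), ENNReal.ofReal_mul (by positivity),
    ENNReal.ofReal_mul (by positivity), ENNReal.ofReal_mul (by positivity),
    ENNReal.ofReal_mul (by positivity), ENNReal.ofReal_pow h1ε, ENNReal.ofReal_pow h1ε,
    ENNReal.ofReal_toReal hM, ENNReal.ofReal_toReal hA, ENNReal.ofReal_ofNat]

/-- **Euler–Lagrange inequality for local maxima of `G_r`.** Fix `r ∈ [0,1]` and let
`G_r(λ) = (λ⊗λ⊗λ⊗λ)(F_r)` where `F_r = quadSetLE r`. If a Borel probability measure `μ` on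
the unit circle is a local maximum of `G_r` along mixtures `(1-ε)μ + εν`, then for every
Borel probability measure `ν`, `(ν⊗μ⊗μ⊗μ)(F_r) ≤ G_r(μ)`. -/
theorem local_max_quad_inequality (r : ℝ) (hr0 : 0 ≤ r) (hr1 : r ≤ 1)
    (μ : Measure unitCircle) [IsProbabilityMeasure μ]
    (hlocal : ∃ ε₀ : ℝ, 0 < ε₀ ∧
      ∀ ε : ℝ, 0 < ε → ε < ε₀ →
        ∀ (ν : Measure unitCircle), IsProbabilityMeasure ν →
          probLE (ENNReal.ofReal (1 - ε) • μ + ENNReal.ofReal ε • ν) r ≤ probLE μ r) :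
    ∀ (ν : Measure unitCircle), IsProbabilityMeasure ν →
      (ν.prod (μ.prod (μ.prod μ))) (quadSetLE r) ≤ probLE μ r :=
  local_max_quad_inequality_general r μ hlocal

end
end

section
/- For every Borel probability measure μ on S¹, ∫_{S¹} ∫_{S¹} (‖x + y‖₂ / 2) dμ(x) dμ(y) ≥ 1/2 (equivalently, for X, Y independent with law μ, the expected distance from the line aff(X,Y) to the origin is at least 1/2). Moreover, equality holds if and only if μ = (1/2)(δ_p + δ_{−p}) for some p ∈ S¹. -/
open MeasureTheory Real
open scoped ENNReal

noncomputable section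

/-! For unit vectors `x, y` we have `t = ‖x + y‖ ∈ [0, 2]`, hence
`t / 2 ≥ t ^ 2 / 4 = (1 + ⟪x, y⟫) / 2`, with equality iff `t ∈ {0, 2}`, i.e. `y = ± x`.
Integrated against `μ ⊗ μ`, the right-hand side becomes `(1 + ‖m‖ ^ 2) / 2`, where `m = ∫ x dμ`.
Equality thus forces `m = 0` and `y = ± x` for `μ ⊗ μ`-almost all `(x, y)`, so `μ` is carried
by some `{p, -p}`; a vanishing barycentre then makes the two masses equal. -/

open scoped InnerProductSpace

section UnitVectors

theorem norm_add_le_two {E : Type*} [SeminormedAddCommGroup E] {x y : E} (hx : ‖x‖ = 1)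
    (hy : ‖y‖ = 1) : ‖x + y‖ ≤ 2 :=
  (norm_add_le x y).trans_eq (by rw [hx, hy]; norm_num)

theorem norm_add_sq_div_four_le_norm_add_div_two {E : Type*} [SeminormedAddCommGroup E]
    {x y : E} (hx : ‖x‖ = 1) (hy : ‖y‖ = 1) : ‖x + y‖ ^ 2 / 4 ≤ ‖x + y‖ / 2 := by
  nlinarith [norm_nonneg (x + y), norm_add_le_two hx hy]

variable {E : Type*} [NormedAddCommGroup E] [InnerProductSpace ℝ E] {x y : E}

theorem norm_add_sq_eq_two_add_two_inner (hx : ‖x‖ = 1) (hy : ‖y‖ = 1) :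
    ‖x + y‖ ^ 2 = 2 + 2 * ⟪x, y⟫_ℝ := by
  rw [norm_add_sq_real, hx, hy]
  ring

theorem norm_add_sq_div_four_eq_norm_add_div_two_iff (hx : ‖x‖ = 1) (hy : ‖y‖ = 1) :
    ‖x + y‖ ^ 2 / 4 = ‖x + y‖ / 2 ↔ y = x ∨ y = -x := by
  constructor
  · intro h
    rcases mul_eq_zero.1 (show ‖x + y‖ * (‖x + y‖ - 2) = 0 by linear_combination 4 * h) with h0 | h2
    · exact Or.inr (neg_eq_of_add_eq_zero_right (norm_eq_zero.1 h0)).symm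
    · have hinner : ⟪x, y⟫_ℝ = 1 := by
        nlinarith [norm_add_sq_eq_two_add_two_inner hx hy]
      exact Or.inl ((inner_eq_one_iff_of_norm_eq_one hx hy).1 hinner).symm
  · rintro (rfl | rfl)
    · rw [← two_smul ℝ y, norm_smul, hy]
      norm_num
    · simp

end UnitVectors

section TwoPointMeasures

variable {α : Type*} [MeasurableSpace α] [MeasurableSingletonClass α]

theorem MeasureTheory.Measure.eq_smul_dirac_add_smul_dirac (μ : Measure α) {a b : α} (hab : a ≠ b)
    (h : ∀ᵐ x ∂μ, x = a ∨ x = b) : μ = μ {a} • Measure.dirac a + μ {b} • Measure.dirac b := by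
  rw [← Measure.restrict_singleton, ← Measure.restrict_singleton,
    ← Measure.restrict_union (Set.disjoint_singleton.2 hab) (measurableSet_singleton b),
    Measure.restrict_eq_self_of_ae_mem (s := {a} ∪ {b}) h]

theorem MeasureTheory.integral_smul_dirac_add_smul_dirac {G : Type*} [NormedAddCommGroup G]
    [NormedSpace ℝ G] [CompleteSpace G] (f : α → G) {c d : ℝ≥0∞} (hc : c ≠ ∞) (hd : d ≠ ∞)
    (a b : α) :
    ∫ x, f x ∂(c • Measure.dirac a + d • Measure.dirac b) = c.toReal • f a + d.toReal • f b := by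
  rw [integral_add_measure ((integrable_dirac (by simp)).smul_measure hc)
      ((integrable_dirac (by simp)).smul_measure hd),
    integral_smul_measure, integral_smul_measure, integral_dirac, integral_dirac]

end TwoPointMeasures

namespace Metric.sphere

variable {E : Type*} [NormedAddCommGroup E] [SecondCountableTopology E] [MeasurableSpace E]
  [BorelSpace E] (μ : Measure (sphere (0 : E) 1)) [IsProbabilityMeasure μ]

theorem integrable_coe : Integrable (fun x : sphere (0 : E) 1 ↦ (x : E)) μ :=
  Integrable.of_bound continuous_subtype_val.aestronglyMeasurable 1
    (ae_of_all _ fun x ↦ (norm_eq_of_mem_sphere x).le)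

theorem integrable_norm_add :
    Integrable (fun z : sphere (0 : E) 1 × sphere (0 : E) 1 ↦ ‖(z.1 : E) + z.2‖) (μ.prod μ) :=
  Integrable.of_bound (by fun_prop) 2 (ae_of_all _ fun z ↦ by
    simpa using norm_add_le_two (norm_eq_of_mem_sphere z.1) (norm_eq_of_mem_sphere z.2))

theorem integrable_norm_add_sq :
    Integrable (fun z : sphere (0 : E) 1 × sphere (0 : E) 1 ↦ ‖(z.1 : E) + z.2‖ ^ 2) (μ.prod μ) :=
  Integrable.of_bound (by fun_prop) 4 (ae_of_all _ fun z ↦ by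
    have h := norm_add_le_two (norm_eq_of_mem_sphere z.1) (norm_eq_of_mem_sphere z.2)
    simp only [norm_pow, norm_norm]
    nlinarith [norm_nonneg ((z.1 : E) + z.2)])

variable [InnerProductSpace ℝ E] [CompleteSpace E]

theorem eq_half_dirac_add_half_dirac_neg {p : sphere (0 : E) 1}
    (hsupp : ∀ᵐ x ∂μ, x = p ∨ x = -p) (hmean : ∫ x, (x : E) ∂μ = 0) :
    μ = (2⁻¹ : ℝ≥0∞) • Measure.dirac p + (2⁻¹ : ℝ≥0∞) • Measure.dirac (-p) := by
  have hp : (p : E) ≠ 0 := ne_zero_of_mem_unit_sphere p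
  have hμ := Measure.eq_smul_dirac_add_smul_dirac μ (ne_neg_of_mem_unit_sphere ℝ p) hsupp
  set a := μ {p}
  set b := μ {-p}
  have hmass : a + b = 1 := by
    simpa using (congrArg (fun ν : Measure (sphere (0 : E) 1) ↦ ν Set.univ) hμ).symm
  have hdiff : (a.toReal - b.toReal) • (p : E) = 0 := by
    rwa [hμ, integral_smul_dirac_add_smul_dirac _ (measure_ne_top _ _) (measure_ne_top _ _),
      coe_neg_sphere, smul_neg, ← sub_eq_add_neg, ← sub_smul] at hmean
  have hab : a = b := (ENNReal.toReal_eq_toReal_iff' (measure_ne_top _ _) (measure_ne_top _ _)).1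
    (sub_eq_zero.1 ((smul_eq_zero.1 hdiff).resolve_right hp))
  have ha : a = 2⁻¹ := ENNReal.eq_inv_of_mul_eq_one_left (by simpa [mul_two, ← hab] using hmass)
  rw [hμ, ← hab, ha]

theorem integral_one_add_inner_div_two (c : E) :
    ∫ y, (1 + ⟪c, (y : E)⟫_ℝ) / 2 ∂μ = (1 + ⟪c, ∫ y, (y : E) ∂μ⟫_ℝ) / 2 := by
  rw [integral_div, integral_add (integrable_const 1) ((integrable_coe μ).const_inner c),
    integral_const, integral_inner (integrable_coe μ)]
  simp

theorem integral_integral_norm_add_sq_div_four :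
    ∫ x, ∫ y, ‖(x : E) + y‖ ^ 2 / 4 ∂μ ∂μ = (1 + ‖∫ x, (x : E) ∂μ‖ ^ 2) / 2 := by
  have hunit (x y : sphere (0 : E) 1) :
      ‖(x : E) + y‖ ^ 2 / 4 = (1 + ⟪(x : E), y⟫_ℝ) / 2 := by
    rw [norm_add_sq_eq_two_add_two_inner (norm_eq_of_mem_sphere x) (norm_eq_of_mem_sphere y)]
    ring
  simp_rw [hunit, integral_one_add_inner_div_two, real_inner_comm (∫ x, (x : E) ∂μ)]
  rw [integral_one_add_inner_div_two, real_inner_self_eq_norm_sq]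

theorem integral_integral_norm_add_div_two_eq :
    ∫ x, ∫ y, ‖(x : E) + y‖ / 2 ∂μ ∂μ = (1 + ‖∫ x, (x : E) ∂μ‖ ^ 2) / 2 +
      ∫ z, (‖(z.1 : E) + z.2‖ / 2 - ‖(z.1 : E) + z.2‖ ^ 2 / 4) ∂μ.prod μ := by
  have hsq := (integrable_norm_add_sq μ).div_const 4
  have hnorm := (integrable_norm_add μ).div_const 2
  calc ∫ x, ∫ y, ‖(x : E) + y‖ / 2 ∂μ ∂μ = ∫ z, ‖(z.1 : E) + z.2‖ / 2 ∂μ.prod μ :=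
        (integral_prod _ hnorm).symm
    _ = ∫ z, ‖(z.1 : E) + z.2‖ ^ 2 / 4 ∂μ.prod μ +
          ∫ z, (‖(z.1 : E) + z.2‖ / 2 - ‖(z.1 : E) + z.2‖ ^ 2 / 4) ∂μ.prod μ := by
        rw [integral_sub hnorm hsq, add_sub_cancel]
    _ = _ := by rw [integral_prod _ hsq, integral_integral_norm_add_sq_div_four]

theorem one_half_le_integral_integral_norm_add_div_two :
    1 / 2 ≤ ∫ x, ∫ y, ‖(x : E) + y‖ / 2 ∂μ ∂μ := by
  have hdeficit := integral_nonneg (μ := μ.prod μ) fun z ↦ sub_nonneg.2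
    (norm_add_sq_div_four_le_norm_add_div_two (norm_eq_of_mem_sphere z.1)
      (norm_eq_of_mem_sphere z.2))
  rw [integral_integral_norm_add_div_two_eq]
  nlinarith [sq_nonneg ‖∫ x, (x : E) ∂μ‖]

theorem integral_integral_norm_add_div_two_eq_one_half_iff :
    ∫ x, ∫ y, ‖(x : E) + y‖ / 2 ∂μ ∂μ = 1 / 2 ↔ ∃ p : sphere (0 : E) 1,
      μ = (2⁻¹ : ℝ≥0∞) • Measure.dirac p + (2⁻¹ : ℝ≥0∞) • Measure.dirac (-p) := by
  constructor
  · intro h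
    rw [integral_integral_norm_add_div_two_eq] at h
    have hnonneg : 0 ≤ fun z : sphere (0 : E) 1 × sphere (0 : E) 1 ↦
        ‖(z.1 : E) + z.2‖ / 2 - ‖(z.1 : E) + z.2‖ ^ 2 / 4 := fun z ↦ sub_nonneg.2
      (norm_add_sq_div_four_le_norm_add_div_two (norm_eq_of_mem_sphere z.1)
        (norm_eq_of_mem_sphere z.2))
    have hdeficit := integral_nonneg (μ := μ.prod μ) hnonneg
    have hmean : ‖∫ x, (x : E) ∂μ‖ ^ 2 = 0 := by nlinarith [sq_nonneg ‖∫ x, (x : E) ∂μ‖]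
    have hae := (integral_eq_zero_iff_of_nonneg hnonneg (((integrable_norm_add μ).div_const 2).sub
      ((integrable_norm_add_sq μ).div_const 4))).1 (by linarith)
    have hpair : ∀ᵐ z ∂μ.prod μ, z.2 = z.1 ∨ z.2 = -z.1 := by
      filter_upwards [hae] with z hz
      simpa only [Subtype.ext_iff, coe_neg_sphere] using
        (norm_add_sq_div_four_eq_norm_add_div_two_iff (norm_eq_of_mem_sphere z.1)
          (norm_eq_of_mem_sphere z.2)).1 (sub_eq_zero.1 hz).symm
    obtain ⟨p, hp⟩ := (Measure.ae_ae_of_ae_prod hpair).exists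
    exact ⟨p, eq_half_dirac_add_half_dirac_neg μ hp (by simpa using hmean)⟩
  · rintro ⟨p, rfl⟩
    have hpp : ‖(p : E) + p‖ = 2 := by
      rw [← two_smul ℝ, norm_smul, norm_eq_of_mem_sphere]
      norm_num
    have hpp' : ‖-(p : E) + -p‖ = 2 := by rw [← neg_add, norm_neg, hpp]
    norm_num [integral_smul_dirac_add_smul_dirac, hpp, hpp']

end Metric.sphere

/-- **Minimal expected distance of a random chord to the origin.** For `X, Y` independent with
law `μ` on the unit circle, the expected distance of the line `aff(X,Y)` to the origin, namely
`∫∫ ‖x+y‖/2 dμ(x) dμ(y)`, is at least `1/2`; equality holds if and only if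
`μ = (1/2)(δ_p + δ_{-p})` for some `p ∈ S¹`. -/
theorem expected_chord_distance_ge_half (μ : Measure unitCircle) [IsProbabilityMeasure μ] :
    (1 / 2 : ℝ) ≤ ∫ x, ∫ y, ‖(x : Plane) + (y : Plane)‖ / 2 ∂μ ∂μ ∧
    ((∫ x, ∫ y, ‖(x : Plane) + (y : Plane)‖ / 2 ∂μ ∂μ) = 1 / 2 ↔
      ∃ p q : unitCircle, (q : Plane) = -(p : Plane) ∧
        μ = (2⁻¹ : ℝ≥0∞) • Measure.dirac p + (2⁻¹ : ℝ≥0∞) • Measure.dirac q) := by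
  -- instance search does not unfold `unitCircle`; expose it as `sphere 0 1`
  revert μ
  unfold unitCircle
  intro μ _
  refine ⟨Metric.sphere.one_half_le_integral_integral_norm_add_div_two μ,
    (Metric.sphere.integral_integral_norm_add_div_two_eq_one_half_iff μ).trans ⟨?_, ?_⟩⟩
  · rintro ⟨p, hμ⟩
    exact ⟨p, -p, coe_neg_sphere p, hμ⟩
  · rintro ⟨p, q, hq, hμ⟩
    obtain rfl : q = -p := Subtype.ext hq
    exact ⟨p, hμ⟩

end
end
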